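/- The map τ : k(s) → k(s) defined by τ(x) = (s+1)·σ(x) restricts to a bijection of E' onto itself, and E' together with this bijection and the element 1 ∈ E' is universal in the following sense: for every k[s]-module M, every additive bijection τ_M : M → M satisfying τ_M(f·m) = σ(f)·τ_M(m) for all f ∈ k[s] and m ∈ M, and every element m₀ ∈ M satisfying m₀ = s·τ_M^{-1}(m₀), there exists a unique k[s]-linear map φ : E' → M such that φ(1) = m₀ and φ ∘ (τ|_{E'}) = τ_M ∘ φ. (This expresses that E' realizes the difference module E = 𝒟/(1 − T^{-1}s)𝒟, the Mellin transform of the exponential D-module.) -/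
import Mathlib

open Polynomial

/-- The `k[s]`-submodule `E'` of `k(s)` generated by the elements
`g_m = ∏_{j=0}^{m-1} (s-j)⁻¹` for `m ∈ ℕ`. -/
noncomputable def Eprime (k : Type*) [Field k] : Submodule (Polynomial k) (RatFunc k) :=
  Submodule.span (Polynomial k)
    (Set.range fun m : ℕ =>
      (∏ j ∈ Finset.range m, ((RatFunc.X : RatFunc k) - (j : RatFunc k)))⁻¹)

section Aux
variable {k : Type*} [Field k] [CharZero k]

omit [CharZero k] in
lemma algMap_eq_aeval' (p : Polynomial k) :
    algebraMap (Polynomial k) (RatFunc k) p = Polynomial.aeval (RatFunc.X) p := by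
  have := Polynomial.aeval_algHom_apply (IsScalarTower.toAlgHom k (Polynomial k) (RatFunc k)) X p
  simpa [RatFunc.algebraMap_X] using this.symm

omit [CharZero k] in
lemma sigma_algMap' (σ : RatFunc k ≃ₐ[k] RatFunc k) (hσX : σ RatFunc.X = RatFunc.X + 1)
    (p : Polynomial k) :
    σ (algebraMap (Polynomial k) (RatFunc k) p)
      = algebraMap (Polynomial k) (RatFunc k) (aeval (X+1 : Polynomial k) p) := by
  rw [algMap_eq_aeval', algMap_eq_aeval',
    ← Polynomial.aeval_algHom_apply σ RatFunc.X p, hσX,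
    ← Polynomial.aeval_algHom_apply (aeval (RatFunc.X : RatFunc k)) (X+1 : Polynomial k) p]
  simp

omit [CharZero k] in
lemma aeval_shift_cancel' (p : Polynomial k) :
    aeval (X+1 : Polynomial k) (aeval (X-1 : Polynomial k) p) = p := by
  have := Polynomial.aeval_algHom_apply (aeval (X+1 : Polynomial k)) (X-1 : Polynomial k) p
  simpa using this.symm

/-- `P m = ∏_{j<m} (X - j)`. -/
noncomputable def PP (k : Type*) [Field k] (m : ℕ) : Polynomial k :=
  ∏ j ∈ Finset.range m, (X - (j : Polynomial k))

/-- `Q m n = ∏_{m ≤ j < n} (X - j)`. -/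
noncomputable def QQ (k : Type*) [Field k] (m n : ℕ) : Polynomial k :=
  ∏ j ∈ Finset.Ico m n, (X - (j : Polynomial k))

lemma PP_ne_zero (m : ℕ) : PP k m ≠ 0 := by
  refine Finset.prod_ne_zero_iff.mpr fun j _ => ?_
  simpa [Polynomial.C_eq_natCast] using X_sub_C_ne_zero (j : k)

lemma QQ_ne_zero (m n : ℕ) : QQ k m n ≠ 0 := by
  refine Finset.prod_ne_zero_iff.mpr fun j _ => ?_
  simpa [Polynomial.C_eq_natCast] using X_sub_C_ne_zero (j : k)

omit [CharZero k] in
lemma PP_mul_QQ {m n : ℕ} (h : m ≤ n) : PP k n = PP k m * QQ k m n :=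
  (Finset.prod_range_mul_prod_Ico _ h).symm

/-- `g m = (algebraMap (P m))⁻¹`. -/
noncomputable def gg (k : Type*) [Field k] (m : ℕ) : RatFunc k :=
  (algebraMap (Polynomial k) (RatFunc k) (PP k m))⁻¹

omit [CharZero k] in
lemma gg_zero : gg k 0 = 1 := by simp [gg, PP]

omit [CharZero k] in
lemma gen_eq (m : ℕ) :
    (∏ j ∈ Finset.range m, ((RatFunc.X : RatFunc k) - (j : RatFunc k)))⁻¹ = gg k m := by
  rw [gg, PP, map_prod]
  congr 1
  refine Finset.prod_congr rfl fun j _ => ?_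
  rw [map_sub, RatFunc.algebraMap_X, map_natCast]

lemma scale_gg {m n : ℕ} (h : m ≤ n) (p : Polynomial k) :
    p • gg k m = (p * QQ k m n) • gg k n := by
  have hQ : algebraMap (Polynomial k) (RatFunc k) (QQ k m n) ≠ 0 :=
    RatFunc.algebraMap_ne_zero (QQ_ne_zero m n)
  have hP : algebraMap (Polynomial k) (RatFunc k) (PP k m) ≠ 0 :=
    RatFunc.algebraMap_ne_zero (PP_ne_zero m)
  rw [Algebra.smul_def, Algebra.smul_def, gg, gg, PP_mul_QQ h, map_mul, map_mul, mul_inv]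
  field_simp

lemma mem_Eprime_iff {x : RatFunc k} :
    x ∈ Eprime k ↔ ∃ m, ∃ p : Polynomial k, x = p • gg k m := by
  constructor
  · intro hx
    refine Submodule.span_induction ?_ ?_ ?_ ?_ hx
    · rintro y ⟨m, rfl⟩
      exact ⟨m, 1, by simpa using gen_eq (k := k) m⟩
    · exact ⟨0, 0, by simp⟩
    · rintro y z - - ⟨m, p, rfl⟩ ⟨n, q, rfl⟩
      refine ⟨max m n, p * QQ k m (max m n) + q * QQ k n (max m n), ?_⟩
      rw [scale_gg (le_max_left m n) p, scale_gg (le_max_right m n) q, add_smul]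
    · rintro c y - ⟨m, p, rfl⟩
      exact ⟨m, c * p, by rw [mul_smul]⟩
  · rintro ⟨m, p, rfl⟩
    exact Submodule.smul_mem _ _ (Submodule.subset_span ⟨m, gen_eq m⟩)

lemma gg_mem (m : ℕ) : gg k m ∈ Eprime k :=
  mem_Eprime_iff.mpr ⟨m, 1, (one_smul _ _).symm⟩

lemma aeval_shift_PP (m : ℕ) :
    aeval (X+1 : Polynomial k) (PP k (m+1)) = (X + 1) * PP k m := by
  rw [PP, map_prod]
  have h : ∀ j ∈ Finset.range (m+1),
      aeval (X+1 : Polynomial k) (X - (j : Polynomial k)) = X + 1 - (j : Polynomial k) := by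
    intro j _; simp
  rw [Finset.prod_congr rfl h, Finset.prod_range_succ']
  simp only [Nat.cast_zero, sub_zero, Nat.cast_add, Nat.cast_one]
  rw [mul_comm, PP]
  congr 1
  exact Finset.prod_congr rfl fun j _ => by ring

lemma X_add_one_ne_zero' : ((RatFunc.X : RatFunc k) + 1) ≠ 0 := by
  have h1 : (X + 1 : Polynomial k) ≠ 0 := by
    simpa using Polynomial.X_add_C_ne_zero (1 : k)
  have : ((RatFunc.X : RatFunc k) + 1) = algebraMap (Polynomial k) (RatFunc k) (X + 1) := by
    rw [map_add, RatFunc.algebraMap_X, map_one]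
  rw [this]
  exact RatFunc.algebraMap_ne_zero h1

/-- Action of τ on `p • g_{m+1}`. -/
lemma tau_smul_gg (σ : RatFunc k ≃ₐ[k] RatFunc k) (hσX : σ RatFunc.X = RatFunc.X + 1)
    (m : ℕ) (p : Polynomial k) :
    ((RatFunc.X : RatFunc k) + 1) * σ (p • gg k (m+1))
      = (aeval (X+1 : Polynomial k) p) • gg k m := by
  have hX1 : algebraMap (Polynomial k) (RatFunc k) (X + 1) ≠ 0 :=
    RatFunc.algebraMap_ne_zero (by simpa using Polynomial.X_add_C_ne_zero (1 : k))
  have hPm : algebraMap (Polynomial k) (RatFunc k) (PP k m) ≠ 0 :=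
    RatFunc.algebraMap_ne_zero (PP_ne_zero m)
  have hAX : ((RatFunc.X : RatFunc k) + 1) = algebraMap (Polynomial k) (RatFunc k) (X + 1) := by
    rw [map_add, RatFunc.algebraMap_X, map_one]
  have key : ∀ (c A B : RatFunc k), c ≠ 0 → c * (A * (c * B)⁻¹) = A * B⁻¹ := by
    intro c A B hc
    rw [mul_inv, mul_left_comm, mul_inv_cancel_left₀ hc]
  rw [Algebra.smul_def, Algebra.smul_def, gg, gg, map_mul, map_inv₀,
    sigma_algMap' σ hσX, sigma_algMap' σ hσX, aeval_shift_PP, map_mul, ← hAX]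
  exact key _ _ _ X_add_one_ne_zero'

/-- τ maps `g_{m+1}` to `g_m`. -/
lemma tau_gg (σ : RatFunc k ≃ₐ[k] RatFunc k) (hσX : σ RatFunc.X = RatFunc.X + 1) (m : ℕ) :
    ((RatFunc.X : RatFunc k) + 1) * σ (gg k (m+1)) = gg k m := by
  have := tau_smul_gg σ hσX m (1 : Polynomial k)
  simpa using this

lemma gg_cancel {m n : ℕ} {p q : Polynomial k} (h : m ≤ n)
    (heq : p • gg k m = q • gg k n) : q = p * QQ k m n := by
  rw [scale_gg h p] at heq
  have hg : gg k n ≠ 0 := by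
    rw [gg]
    exact inv_ne_zero (RatFunc.algebraMap_ne_zero (PP_ne_zero n))
  rw [Algebra.smul_def, Algebra.smul_def] at heq
  have := mul_right_cancel₀ hg heq
  exact (RatFunc.algebraMap_injective k this).symm

section Mside
variable {M : Type*} [AddCommGroup M] [Module (Polynomial k) M] (τM : M ≃+ M)
  (hτM : ∀ (f : Polynomial k) (m : M), τM (f • m) = (aeval (X + 1 : Polynomial k) f) • τM m)

include hτM

lemma symm_smul (f : Polynomial k) (m : M) :
    τM.symm (f • m) = (aeval (X - 1 : Polynomial k) f) • τM.symm m := by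
  apply τM.injective
  rw [hτM, aeval_shift_cancel', AddEquiv.apply_symm_apply, AddEquiv.apply_symm_apply]

variable {m₀ : M} (hm₀ : m₀ = (X : Polynomial k) • τM.symm m₀)
include hm₀

lemma mseq_rec : ∀ n : ℕ,
    τM.symm^[n] m₀ = (X - (n : Polynomial k)) • τM.symm^[n+1] m₀ := by
  intro n
  induction n with
  | zero => simpa using hm₀
  | succ n ih =>
    have h1 : τM.symm^[n+1] m₀ = τM.symm (τM.symm^[n] m₀) :=
      Function.iterate_succ_apply' _ _ _
    have h2 : τM.symm^[n+2] m₀ = τM.symm (τM.symm^[n+1] m₀) :=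
      Function.iterate_succ_apply' _ _ _
    rw [h1, ih, symm_smul τM hτM, ← h2]
    congr 1
    rw [map_sub, aeval_X, map_natCast]
    push_cast
    ring

lemma mseq_scale {m n : ℕ} (h : m ≤ n) :
    τM.symm^[m] m₀ = QQ k m n • τM.symm^[n] m₀ := by
  induction n, h using Nat.le_induction with
  | base => simp [QQ]
  | succ n hmn ih =>
    rw [ih, mseq_rec τM hτM hm₀ n, ← mul_smul, QQ, QQ, Finset.prod_Ico_succ_top hmn]

lemma core_welldef {m n : ℕ} {p q : Polynomial k}
    (heq : p • gg k m = q • gg k n) :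
    p • τM.symm^[m] m₀ = q • τM.symm^[n] m₀ := by
  rcases le_total m n with h | h
  · obtain rfl := gg_cancel h heq
    rw [mseq_scale τM hτM hm₀ h, ← mul_smul]
  · obtain rfl := gg_cancel h heq.symm
    rw [mseq_scale τM hτM hm₀ h, ← mul_smul]

end Mside
end Aux

/-- The map `τ(x) = (s+1)·σ(x)` (where `σ` is the automorphism of `k(s)` with `σ(s) = s+1`)
restricts to a bijection of `E'` onto itself, and `(E', τ|E', 1)` is universal: for every
`k[s]`-module `M`, every additive bijection `τ_M : M → M` with `τ_M(f·m) = σ(f)·τ_M(m)`, and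
every `m₀ ∈ M` with `m₀ = s·τ_M⁻¹(m₀)`, there is a unique `k[s]`-linear `φ : E' → M` with
`φ(1) = m₀` and `φ ∘ τ|E' = τ_M ∘ φ`. -/
theorem stmt10 (k : Type*) [Field k] [CharZero k]
    (σ : RatFunc k ≃ₐ[k] RatFunc k) (hσX : σ RatFunc.X = RatFunc.X + 1) :
    Set.BijOn (fun x => ((RatFunc.X : RatFunc k) + 1) * σ x) (Eprime k) (Eprime k) ∧
    ∀ (hτ : ∀ x ∈ Eprime k, ((RatFunc.X : RatFunc k) + 1) * σ x ∈ Eprime k)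
      (h1 : (1 : RatFunc k) ∈ Eprime k)
      (M : Type*) [AddCommGroup M] [Module (Polynomial k) M]
      (τM : M ≃+ M)
      (hτM : ∀ (f : Polynomial k) (m : M),
        τM (f • m) = (Polynomial.aeval (Polynomial.X + 1 : Polynomial k) f) • τM m)
      (m₀ : M) (hm₀ : m₀ = (Polynomial.X : Polynomial k) • τM.symm m₀),
      ∃! φ : Eprime k →ₗ[Polynomial k] M,
        φ ⟨1, h1⟩ = m₀ ∧
        ∀ x : Eprime k, φ ⟨((RatFunc.X : RatFunc k) + 1) * σ x, hτ x x.2⟩ = τM (φ x) := by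
  constructor
  · refine ⟨?_, ?_, ?_⟩
    · -- MapsTo
      intro x hx
      obtain ⟨m, p, rfl⟩ := mem_Eprime_iff.mp hx
      show ((RatFunc.X : RatFunc k) + 1) * σ (p • gg k m) ∈ Eprime k
      rw [scale_gg (Nat.le_succ m) p, tau_smul_gg σ hσX]
      exact mem_Eprime_iff.mpr ⟨m, _, rfl⟩
    · -- InjOn
      intro x _ y _ h
      simp only at h
      exact σ.injective (mul_left_cancel₀ X_add_one_ne_zero' h)
    · -- SurjOn
      intro y hy
      obtain ⟨m, p, rfl⟩ := mem_Eprime_iff.mp hy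
      refine ⟨(aeval (X - 1 : Polynomial k) p) • gg k (m+1),
        mem_Eprime_iff.mpr ⟨m+1, _, rfl⟩, ?_⟩
      show ((RatFunc.X : RatFunc k) + 1) * σ (_ • gg k (m+1)) = _
      rw [tau_smul_gg σ hσX, aeval_shift_cancel']
  · intro hτ h1 M _ _ τM hτM m₀ hm₀
    have hrep : ∀ x : Eprime k, ∃ mp : ℕ × Polynomial k, (x : RatFunc k) = mp.2 • gg k mp.1 := by
      intro x
      obtain ⟨m, p, h⟩ := mem_Eprime_iff.mp x.2
      exact ⟨(m, p), h⟩
    choose d hd using hrep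
    have hF0 : ∀ (x : Eprime k) (m : ℕ) (p : Polynomial k),
        (x : RatFunc k) = p • gg k m →
        (d x).2 • τM.symm^[(d x).1] m₀ = p • τM.symm^[m] m₀ := by
      intro x m p h
      exact core_welldef τM hτM hm₀ ((hd x).symm.trans h)
    set φ : Eprime k →ₗ[Polynomial k] M :=
      { toFun := fun x => (d x).2 • τM.symm^[(d x).1] m₀
        map_add' := by
          intro x y
          set N := max (d x).1 (d y).1 with hN
          have hx : (x : RatFunc k) = ((d x).2 * QQ k (d x).1 N) • gg k N :=
            (hd x).trans (scale_gg (le_max_left _ _) _)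
          have hy : (y : RatFunc k) = ((d y).2 * QQ k (d y).1 N) • gg k N :=
            (hd y).trans (scale_gg (le_max_right _ _) _)
          have hxy : ((x + y : Eprime k) : RatFunc k)
              = ((d x).2 * QQ k (d x).1 N + (d y).2 * QQ k (d y).1 N) • gg k N := by
            rw [Submodule.coe_add, hx, hy, add_smul]
          show (d (x + y)).2 • τM.symm^[(d (x + y)).1] m₀
            = (d x).2 • τM.symm^[(d x).1] m₀ + (d y).2 • τM.symm^[(d y).1] m₀
          rw [hF0 _ _ _ hxy, hF0 _ _ _ hx, hF0 _ _ _ hy, add_smul]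
        map_smul' := by
          intro c x
          have hx : ((c • x : Eprime k) : RatFunc k) = (c * (d x).2) • gg k (d x).1 := by
            rw [SetLike.val_smul, hd x, mul_smul]
          show (d (c • x)).2 • τM.symm^[(d (c • x)).1] m₀
            = c • ((d x).2 • τM.symm^[(d x).1] m₀)
          rw [hF0 _ _ _ hx, mul_smul] } with hφ
    have hφ_apply : ∀ (x : Eprime k) (m : ℕ) (p : Polynomial k),
        (x : RatFunc k) = p • gg k m → φ x = p • τM.symm^[m] m₀ := by
      intro x m p h
      show (d x).2 • τM.symm^[(d x).1] m₀ = _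
      exact hF0 x m p h
    have hc1 : φ ⟨1, h1⟩ = m₀ := by
      have : ((⟨1, h1⟩ : Eprime k) : RatFunc k) = (1 : Polynomial k) • gg k 0 := by
        rw [one_smul, gg_zero]
      rw [hφ_apply _ _ _ this, one_smul, Function.iterate_zero_apply]
    have hτMms : ∀ m : ℕ, τM (τM.symm^[m+1] m₀) = τM.symm^[m] m₀ := by
      intro m
      rw [Function.iterate_succ_apply', AddEquiv.apply_symm_apply]
    have hc2 : ∀ x : Eprime k,
        φ ⟨((RatFunc.X : RatFunc k) + 1) * σ x, hτ x x.2⟩ = τM (φ x) := by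
      intro x
      set m := (d x).1 with hm
      set p := (d x).2 with hp
      have hx' : (x : RatFunc k) = (p * QQ k m (m+1)) • gg k (m+1) :=
        (hd x).trans (scale_gg (Nat.le_succ _) _)
      have hτx : ((⟨((RatFunc.X : RatFunc k) + 1) * σ x, hτ x x.2⟩ : Eprime k) : RatFunc k)
          = (aeval (X + 1 : Polynomial k) (p * QQ k m (m+1))) • gg k m := by
        show ((RatFunc.X : RatFunc k) + 1) * σ (x : RatFunc k) = _
        rw [hx', tau_smul_gg σ hσX]
      rw [hφ_apply _ _ _ hτx, hφ_apply _ _ _ hx', hτM, hτMms]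
    refine ⟨φ, ⟨hc1, hc2⟩, ?_⟩
    intro ψ ⟨hψ1, hψc⟩
    have claim : ∀ m : ℕ, ψ ⟨gg k m, gg_mem m⟩ = τM.symm^[m] m₀ := by
      intro m
      induction m with
      | zero =>
        have h0 : (⟨gg k 0, gg_mem 0⟩ : Eprime k) = ⟨1, h1⟩ := Subtype.ext gg_zero
        rw [h0, hψ1, Function.iterate_zero_apply]
      | succ m ih =>
        have h2 := hψc ⟨gg k (m+1), gg_mem (m+1)⟩
        have hco : (⟨((RatFunc.X : RatFunc k) + 1) * σ ((⟨gg k (m+1), gg_mem (m+1)⟩ :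
            Eprime k) : RatFunc k), hτ _ (gg_mem (m+1))⟩ : Eprime k)
            = ⟨gg k m, gg_mem m⟩ := Subtype.ext (tau_gg σ hσX m)
        rw [hco, ih] at h2
        rw [Function.iterate_succ_apply', h2, AddEquiv.symm_apply_apply]
    apply LinearMap.ext
    intro x
    have hx : x = (d x).2 • (⟨gg k (d x).1, gg_mem _⟩ : Eprime k) :=
      Subtype.ext (by rw [SetLike.val_smul]; exact hd x)
    rw [hx, map_smul, map_smul, claim,
      hφ_apply ⟨gg k (d x).1, gg_mem _⟩ (d x).1 1 (by rw [one_smul]), one_smul]
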